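/- Let Γ be a finite graph and F a subset of its vertices. Suppose every vertex not in F has degree exactly 2, and v ∈ F has odd degree. Then there exists a path in Γ from v to some vertex of F \ {v}. -/

import Mathlib

/-- The degree of a vertex in a finite multigraph given by an endpoint
assignment `ends : E → V × V`: the number of edge-endpoints at `v`
(loops count twice). -/
def Multigraph.deg {V E : Type*} [Fintype E] [DecidableEq V]
    (ends : E → V × V) (v : V) : ℕ :=
  ∑ e : E, ((if (ends e).1 = v then 1 else 0) + (if (ends e).2 = v then 1 else 0))

/-- Adjacency in a multigraph: some edge joins `v` and `w`. -/
def Multigraph.Adj {V E : Type*} (ends : E → V × V) (v w : V) : Prop :=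
  ∃ e : E, ends e = (v, w) ∨ ends e = (w, v)

/-- Existence of a path between vertices: a chain of edges. -/
def Multigraph.Reachable {V E : Type*} (ends : E → V × V) (v w : V) : Prop :=
  Relation.ReflTransGen (Multigraph.Adj ends) v w

/-!
Handshake argument on a connected component: every edge has both ends or no end in the set of
vertices reachable from `v`, so the degrees over that set sum to an even number. Hence an odd-degree
vertex `v` reaches another odd-degree vertex `w`, and `w` lies in `F` since degree `2` is even.
-/

namespace Multigraph

section Reachability

variable {V E : Type*} (ends : E → V × V)

theorem reachable_fst_iff_reachable_snd {v : V} (e : E) :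
    Reachable ends v (ends e).1 ↔ Reachable ends v (ends e).2 :=
  ⟨fun h => h.tail ⟨e, Or.inl rfl⟩, fun h => h.tail ⟨e, Or.inr rfl⟩⟩

end Reachability

section Degree

variable {V E : Type*} [Fintype E] [DecidableEq V] (ends : E → V × V)

theorem sum_deg_eq_sum_edges (S : Finset V) :
    ∑ w ∈ S, deg ends w =
      ∑ e : E, ((if (ends e).1 ∈ S then 1 else 0) + (if (ends e).2 ∈ S then 1 else 0)) := by
  unfold deg
  rw [Finset.sum_comm]
  refine Finset.sum_congr rfl fun e _ => ?_
  rw [Finset.sum_add_distrib]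
  congr 1 <;> simp [eq_comm]

theorem even_sum_deg_of_forall_fst_mem_iff (S : Finset V)
    (hS : ∀ e : E, (ends e).1 ∈ S ↔ (ends e).2 ∈ S) :
    Even (∑ w ∈ S, deg ends w) := by
  rw [sum_deg_eq_sum_edges]
  refine Finset.even_sum _ fun e _ => ?_
  by_cases h : (ends e).1 ∈ S
  · simp [h, (hS e).mp h]
  · simp [h, mt (hS e).mpr h]

theorem exists_reachable_ne_of_odd_deg [Fintype V] {v : V} (hodd : Odd (deg ends v)) :
    ∃ w ≠ v, Reachable ends v w ∧ Odd (deg ends w) := by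
  classical
  by_contra! h
  set S := Finset.univ.filter (Reachable ends v)
  have hvS : v ∈ S := Finset.mem_filter.mpr ⟨Finset.mem_univ v, Relation.ReflTransGen.refl⟩
  have hS_even : Even (∑ w ∈ S, deg ends w) :=
    even_sum_deg_of_forall_fst_mem_iff ends S fun e => by
      simpa [S] using reachable_fst_iff_reachable_snd ends e
  have hrest_even : Even (∑ w ∈ S.erase v, deg ends w) := by
    refine Finset.even_sum _ fun w hw => ?_
    obtain ⟨hwv, hwS⟩ := Finset.mem_erase.mp hw
    exact Nat.not_odd_iff_even.mp (h w hwv (Finset.mem_filter.mp hwS).2)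
  rw [← Finset.add_sum_erase S _ hvS] at hS_even
  exact Nat.not_even_iff_odd.mpr (hodd.add_even hrest_even) hS_even

end Degree

end Multigraph

theorem path_to_other_vertex_of_F_general {V E : Type*} [Fintype V] [Fintype E]
    [DecidableEq V] (ends : E → V × V) (F : Set V) (v : V)
    (hodd : Odd (Multigraph.deg ends v))
    (hdeg : ∀ w : V, w ∉ F → Multigraph.deg ends w = 2) :
    ∃ w ∈ F \ {v}, Multigraph.Reachable ends v w := by
  obtain ⟨w, hwv, hreach, hwodd⟩ := Multigraph.exists_reachable_ne_of_odd_deg ends hodd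
  refine ⟨w, ⟨?_, hwv⟩, hreach⟩
  by_contra hwF
  rw [hdeg w hwF] at hwodd
  exact Nat.not_odd_iff_even.mpr even_two hwodd

/-- If every vertex outside `F` has degree exactly 2 and `v ∈ F` has odd degree,
then there is a path in the graph from `v` to some vertex of `F \ {v}`. -/
theorem path_to_other_vertex_of_F {V E : Type*} [Fintype V] [Fintype E]
    [DecidableEq V] (ends : E → V × V) (F : Set V) (v : V)
    (hv : v ∈ F) (hodd : Odd (Multigraph.deg ends v))
    (hdeg : ∀ w : V, w ∉ F → Multigraph.deg ends w = 2) :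
    ∃ w ∈ F \ {v}, Multigraph.Reachable ends v w :=
  path_to_other_vertex_of_F_general ends F v hodd hdeg
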